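/- arXiv:2007.02823 — 6 statements merged into one kernel-verified Lean document; each statement's English description precedes it below -/
import Mathlib

section
/- If φ contains exactly one primitive proposition, prop(φ) = {p}, then Consis(φ,i) is equivalent to ∃x ¬A_i(x) at the states the agent considers possible: for every probabilistic awareness structure M and every state t such that L(t) ⊆ A_i(t) ∪ Φ' and p ∉ A_i(t), one has t ∈ cons(M,φ,i) if and only if (M,t) ⊨ ∃x ¬A_i(x) (i.e., iff there is a quantifier-free sentence whose primitive propositions lie in L(t) but not all in A_i(t)). -/
namespace DynAwareness

/-- Primitive propositions: `Sum.inl n` are the "real" primitive propositions (Φ),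
`Sum.inr n` are the "shadow" propositions (Φ'). Φ⁺ is the whole type. -/
abbrev PProp : Type := ℕ ⊕ ℕ

def realProps : Set PProp := Set.range Sum.inl
def shadowProps : Set PProp := Set.range Sum.inr

/-- A probabilistic awareness structure for agents in `ι` over Φ⁺. -/
structure PAS (ι : Type) where
  S : Type
  finS : Finite S
  pi : S → PProp → Bool
  K : ι → S → S → Prop
  A : ι → S → Set PProp
  PR : ι → S → Set S → ℝ
  L : S → Set PProp
  K_eucl : ∀ i s t u, K i s t → K i s u → K i t u
  K_trans : ∀ i s t u, K i s t → K i t u → K i s u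
  K_serial : ∀ i s, ∃ t, K i s t
  PR_nonneg : ∀ i s E, 0 ≤ PR i s E
  PR_empty : ∀ i s, PR i s (∅ : Set S) = 0
  PR_add : ∀ i s E F, Disjoint E F → PR i s (E ∪ F) = PR i s E + PR i s F
  PR_univ : ∀ i s, PR i s Set.univ = 1
  PR_K : ∀ i s, PR i s {t | K i s t} = 1
  PR_inv : ∀ i s t, K i s t → PR i t = PR i s
  A_inv : ∀ i s t, K i s t → A i t = A i s
  A_sub_L : ∀ i s, A i s ⊆ L s
  L_K : ∀ i s t, K i s t → L t ⊆ A i s ∪ shadowProps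

/-- Formulas of the language L^{∀,X,ℓ,A}_n (together with the consistency
formulas `consis φ i`).  A likelihood formula
`a_1 ℓ_i(φ_1) + ⋯ + a_k ℓ_i(φ_k) > b` is `lik i k a φs b`. -/
inductive Formula (ι : Type) : Type
  | var : ℕ → Formula ι
  | prim : PProp → Formula ι
  | neg : Formula ι → Formula ι
  | conj : Formula ι → Formula ι → Formula ι
  | aw : ι → Formula ι → Formula ι
  | kn : ι → Formula ι → Formula ι
  | lik : ι → (k : ℕ) → (Fin k → ℚ) → (Fin k → Formula ι) → ℚ → Formula ι
  | all : ℕ → Formula ι → Formula ι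
  | consis : Formula ι → ι → Formula ι

namespace Formula

variable {ι : Type}

/-- prop(φ): the primitive propositions occurring in φ. -/
def props : Formula ι → Set PProp
  | .var _ => ∅
  | .prim p => {p}
  | .neg φ => φ.props
  | .conj φ ψ => φ.props ∪ ψ.props
  | .aw _ φ => φ.props
  | .kn _ φ => φ.props
  | .lik _ _ _ φs _ => ⋃ j, (φs j).props
  | .all _ φ => φ.props
  | .consis _ _ => ∅

/-- Simultaneous substitution of formulas for free variables. -/
def subst (σ : ℕ → Formula ι) : Formula ι → Formula ι
  | .var n => σ n
  | .prim p => .prim p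
  | .neg φ => .neg (φ.subst σ)
  | .conj φ ψ => .conj (φ.subst σ) (ψ.subst σ)
  | .aw i φ => .aw i (φ.subst σ)
  | .kn i φ => .kn i (φ.subst σ)
  | .lik i k a φs b => .lik i k a (fun j => (φs j).subst σ) b
  | .all x φ => .all x (φ.subst (Function.update σ x (.var x)))
  | .consis φ i => .consis (φ.subst σ) i

/-- φ[x/χ]: substitute χ for the free occurrences of the variable x in φ. -/
def subst1 (x : ℕ) (χ : Formula ι) (φ : Formula ι) : Formula ι :=
  φ.subst (Function.update Formula.var x χ)

/-- Quantifier-free sentences of the (static) language: no variables, no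
quantifiers (and no consistency formulas). -/
def qfSent : Formula ι → Prop
  | .var _ => False
  | .prim _ => True
  | .neg φ => φ.qfSent
  | .conj φ ψ => φ.qfSent ∧ ψ.qfSent
  | .aw _ φ => φ.qfSent
  | .kn _ φ => φ.qfSent
  | .lik _ _ _ φs _ => ∀ j, (φs j).qfSent
  | .all _ _ => False
  | .consis _ _ => False

/-- Formulas of the static language L^{∀,X,ℓ,A}_n(Φ): built from primitive
propositions in Φ (no consistency formulas). -/
def static : Formula ι → Prop
  | .var _ => True
  | .prim p => p ∈ realProps
  | .neg φ => φ.static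
  | .conj φ ψ => φ.static ∧ ψ.static
  | .aw _ φ => φ.static
  | .kn _ φ => φ.static
  | .lik _ _ _ φs _ => ∀ j, (φs j).static
  | .all _ φ => φ.static
  | .consis _ _ => False

/-- Material implication (abbreviation). -/
def imp (φ ψ : Formula ι) : Formula ι := .neg (.conj φ (.neg ψ))

/-- ∃x φ abbreviates ¬∀x¬φ. -/
def exis (x : ℕ) (φ : Formula ι) : Formula ι := .neg (.all x (.neg φ))

/-- ℓ_i(φ) > b, as a likelihood formula with a single term. -/
def likGt (i : ι) (φ : Formula ι) (b : ℚ) : Formula ι :=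
  .lik i 1 (fun _ => 1) (fun _ => φ) b

/-- a₁ℓ_i(φ₁) + a₂ℓ_i(φ₂) > b, as a likelihood formula with two terms. -/
def lik2 (i : ι) (a₁ : ℚ) (φ₁ : Formula ι) (a₂ : ℚ) (φ₂ : Formula ι) (b : ℚ) : Formula ι :=
  .lik i 2 ![a₁, a₂] ![φ₁, φ₂] b

end Formula

variable {ι : Type}

/-- A state t is consistent with i becoming aware of φ: L(t) contains at least
as many shadow propositions of which i is unaware as there are primitive
propositions of φ of which i is unaware. -/
def consistentWith (M : PAS ι) (φ : Formula ι) (i : ι) (t : M.S) : Prop :=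
  ∃ g : (φ.props \ M.A i t : Set PProp) → ((M.L t ∩ shadowProps) \ M.A i t : Set PProp),
    Function.Injective g

/-- cons(M,φ,i): the set of states consistent with i becoming aware of φ. -/
def consSet (M : PAS ι) (φ : Formula ι) (i : ι) : Set M.S :=
  {t | consistentWith M φ i t}

/-- Truth for quantifier-free sentences (no free variables occur, so no
environment is needed). -/
def TruthQF (M : PAS ι) : Formula ι → M.S → Prop
  | .var _, _ => False
  | .prim p, s => p ∈ M.L s ∧ M.pi s p = true
  | .neg φ, s => φ.props ⊆ M.L s ∧ ¬ TruthQF M φ s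
  | .conj φ ψ, s => TruthQF M φ s ∧ TruthQF M ψ s
  | .aw i φ, s => φ.props ⊆ M.A i s
  | .kn i φ, s => φ.props ⊆ M.A i s ∧ ∀ t, M.K i s t → TruthQF M φ t
  | .lik i k a φs b, s =>
      (⋃ j, (φs j).props) ⊆ M.A i s ∧
      (b : ℝ) < ∑ j : Fin k, ((a j : ℝ) * M.PR i s ({t | TruthQF M (φs j) t} ∩ {t | M.K i s t}))
  | .all _ _, _ => False
  | .consis φ i, s => consistentWith M φ i s

/-- Truth of a formula at a state, relative to an environment σ assigning
(quantifier-free sentences to) the variables. -/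
def Truth (M : PAS ι) : (ℕ → Formula ι) → Formula ι → M.S → Prop
  | σ, .var n, s => TruthQF M (σ n) s
  | _, .prim p, s => p ∈ M.L s ∧ M.pi s p = true
  | σ, .neg φ, s => (φ.subst σ).props ⊆ M.L s ∧ ¬ Truth M σ φ s
  | σ, .conj φ ψ, s => Truth M σ φ s ∧ Truth M σ ψ s
  | σ, .aw i φ, s => (φ.subst σ).props ⊆ M.A i s
  | σ, .kn i φ, s => (φ.subst σ).props ⊆ M.A i s ∧ ∀ t, M.K i s t → Truth M σ φ t
  | σ, .lik i k a φs b, s =>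
      (⋃ j, ((φs j).subst σ).props) ⊆ M.A i s ∧
      (b : ℝ) < ∑ j : Fin k, ((a j : ℝ) * M.PR i s ({t | Truth M σ (φs j) t} ∩ {t | M.K i s t}))
  | σ, .all x φ, s =>
      ∀ ψ : Formula ι, ψ.qfSent → ψ.props ⊆ M.L s → Truth M (Function.update σ x ψ) φ s
  | σ, .consis φ i, s => consistentWith M (φ.subst σ) i s

/-- (M,s) ⊨ φ (sentences do not depend on the environment). -/
def Sat (M : PAS ι) (s : M.S) (φ : Formula ι) : Prop :=
  Truth M Formula.var φ s

/-- [[φ]]_M -/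
def intension (M : PAS ι) (φ : Formula ι) : Set M.S := {s | Sat M s φ}

/-- A φ-replacement scheme. -/
def IsRS (φ : Formula ι) (f : PProp → PProp) : Prop :=
  (∀ p, p ∉ φ.props → f p = p) ∧ Set.InjOn f φ.props

/-- A φ-replacement scheme compatible with i becoming aware of φ at s. -/
def CompatRS (M : PAS ι) (φ : Formula ι) (i : ι) (s : M.S) (f : PProp → PProp) : Prop :=
  IsRS φ f ∧ (∀ p ∈ φ.props ∩ M.A i s, f p = p) ∧
    f '' (φ.props \ M.A i s) ⊆ (M.L s ∩ shadowProps) \ M.A i s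

/-- RS(φ) = {id} ∪ ∪_{i,s} RS(φ,i,s). -/
def memRS (M : PAS ι) (φ : Formula ι) (f : PProp → PProp) : Prop :=
  f = id ∨ ∃ (i : ι) (s : M.S), CompatRS M φ i s f

/-- t' (a state of M') is an f-replacement of t (a state of M). -/
def IsFRepl (M M' : PAS ι) (f : PProp → PProp) (t : M.S) (t' : M'.S) : Prop :=
  f '' M'.L t' = M.L t ∧ ∀ p ∈ M'.L t', M'.pi t' p = M.pi t (f p)

/-- A situation: a model together with a state. -/
structure Situation (ι : Type) where
  M : PAS ι
  s : M.S

/-- A transition rule maps a situation, a formula and an agent to a situation. -/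
abbrev TransitionRule (ι : Type) := Situation ι → Formula ι → ι → Situation ι

/-- rep(t') relative to a relation T: all states related by T to t' via some
replacement scheme. -/
def repSet {M M' : PAS ι} (T : M.S → M'.S → (PProp → PProp) → Prop) (t' : M.S) : Set M'.S :=
  {u | ∃ f, T t' u f}

/-- Conditions T1–T4 on the relation T witnessing that (M',s') is an acceptable
update of (M,s) when i becomes aware of φ. -/
def GoodT (M : PAS ι) (s : M.S) (φ : Formula ι) (i : ι) (M' : PAS ι) (s' : M'.S)
    (T : M.S → M'.S → (PProp → PProp) → Prop) : Prop :=
  -- T ⊆ S × S' × RS(φ)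
  (∀ t t' f, T t t' f → memRS M φ f) ∧
  -- T1
  (∀ u : M'.S,
    (∃ t f, T t u f) ∧
    (∀ t₁ f₁ t₂ f₂, T t₁ u f₁ → T t₂ u f₂ → t₁ = t₂ ∧ f₁ = f₂) ∧
    (∀ t f, T t u f → IsFRepl M M' f t u)) ∧
  -- T2
  (T s s' id ∧ M'.A i s' = M.A i s ∪ φ.props ∧ ∀ j, j ≠ i → M'.A j s' = M.A j s) ∧
  -- T3
  (∀ t t' f, T t t' f → (M.K i s t ∨ t = s) → (f ≠ id ∨ (t' = s' ∧ f = id)) →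
    M.PR i s (consSet M φ i) ≠ 0 →
    (({u | M'.K i t' u} =
        {u | ∃ t₀ f₀, (M.K i s t₀ ∧ t₀ ∈ consSet M φ i) ∧ CompatRS M φ i s f₀ ∧ T t₀ u f₀}) ∧
     (∀ t₀, M.K i s t₀ → t₀ ∈ consSet M φ i →
        M'.PR i t' (repSet T t₀ ∩ {u | M'.K i t' u}) =
          M.PR i s {t₀} / M.PR i s (consSet M φ i)) ∧
     (∀ j, j ≠ i → f '' M'.A j t' = M.A j t))) ∧
  -- T4
  (∀ t t' f, T t t' f → ∀ j,
    (j ≠ i ∨ ¬ (M.K i s t ∨ t = s) ∨ (f = id ∧ t' ≠ s')) →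
    (f '' M'.A j t' = M.A j t ∧
     (∀ t₀, M.K j t t₀ → ∃ u, u ≠ s' ∧ T t₀ u f) ∧
     ({u | M'.K j t' u} = {u | ∃ t₀, M.K j t t₀ ∧ T t₀ u f ∧ u ≠ s'}) ∧
     (∀ t₀, M.K j t t₀ →
        M'.PR j t' (repSet T t₀ ∩ {u | M'.K i t' u}) = M.PR j s {t₀})))

/-- An acceptable transition rule. -/
def Acceptable (τ : TransitionRule ι) : Prop :=
  ∀ (M : PAS ι) (s : M.S) (φ : Formula ι) (i : ι), φ.props ⊆ M.L s →
    ((φ.props ⊆ M.A i s → τ ⟨M, s⟩ φ i = ⟨M, s⟩) ∧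
     (¬ φ.props ⊆ M.A i s →
       ∃ T : M.S → (τ ⟨M, s⟩ φ i).M.S → (PProp → PProp) → Prop,
         GoodT M s φ i (τ ⟨M, s⟩ φ i).M (τ ⟨M, s⟩ φ i).s T))

/-- If prop(φ) = {p}, then Consis(φ,i) is equivalent to ∃x ¬A_i(x) at the
states the agent considers possible: for every state t with
L(t) ⊆ A_i(t) ∪ Φ' and p ∉ A_i(t),
t ∈ cons(M,φ,i) iff (M,t) ⊨ ∃x ¬A_i(x). -/
theorem consis_of_one_prop {ι : Type} (M : PAS ι) (i : ι) (φ : Formula ι)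
    (p : PProp) (hφ : φ.props = {p}) (t : M.S)
    (hLt : M.L t ⊆ M.A i t ∪ shadowProps) (hp : p ∉ M.A i t) :
    t ∈ consSet M φ i ↔ Sat M t (Formula.exis 0 (.neg (.aw i (.var 0)))) := by
  simp only [Sat, Formula.exis, Truth, Formula.subst, Formula.props, Function.update_self]
  constructor
  · rintro ⟨g, -⟩
    have hpmem : p ∈ (φ.props \ M.A i t : Set PProp) := by
      rw [hφ]; exact ⟨rfl, hp⟩
    obtain ⟨q, hq⟩ := g ⟨p, hpmem⟩
    refine ⟨Set.empty_subset _, fun h => ?_⟩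
    obtain ⟨h1, h2⟩ := h (.prim q) trivial (by
      intro r hr
      rw [Set.mem_singleton_iff.mp hr]
      exact hq.1.1)
    exact h2 ⟨h1, fun hsub => hq.2 (hsub rfl)⟩
  · rintro ⟨-, h⟩
    by_contra hcon
    apply h
    intro ψ hqf hsub
    refine ⟨hsub, fun hc => ?_⟩
    obtain ⟨q, hqψ, hqA⟩ := Set.not_subset.mp hc.2
    have hqL := hsub hqψ
    have hqs : q ∈ shadowProps := (hLt hqL).resolve_left hqA
    refine hcon ⟨fun _ => ⟨q, ⟨⟨hqL, hqs⟩, hqA⟩⟩, fun a b _ => ?_⟩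
    apply Subtype.ext
    have ha : (a : PProp) ∈ ({p} : Set PProp) := hφ ▸ a.2.1
    have hb : (b : PProp) ∈ ({p} : Set PProp) := hφ ▸ b.2.1
    exact (Set.eq_of_mem_singleton ha).trans (Set.eq_of_mem_singleton hb).symm

end DynAwareness
end

section
/- Inexpressibility of consistency: if φ is a formula with |prop(φ)| > 1, then Consis(φ,i) is not equivalent to any formula of the static language L^{∀,X,ℓ,A}_n(Φ): there is no formula χ of the language built from Φ by ¬, ∧, A_i, X_i, likelihood formulas, and quantification such that for every probabilistic awareness structure M and every state t of M, (M,t) ⊨ Consis(φ,i) if and only if (M,t) ⊨ χ. -/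
namespace DynAwareness

variable {ι : Type}

/-! Take two one-state models in which nobody is aware of anything and every primitive
proposition is false, one whose language contains a single shadow proposition and one whose
language contains all of them. Consistency with becoming aware of two propositions fails in
the first and holds in the second. A static formula cannot separate them: its primitive
propositions are real, hence outside both languages, so in these models its truth only depends
on which subformulas mention propositions at all, and a quantifier ranges over sentences that
can be renamed into either language without changing that information. -/

theorem disjoint_realProps_shadowProps : Disjoint realProps shadowProps :=
  Set.disjoint_range_iff.2 fun _ _ => Sum.inl_ne_inr

namespace Formula

theorem static.props_subset {χ : Formula ι} (hχ : χ.static) : χ.props ⊆ realProps := by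
  induction χ with
  | var => exact Set.empty_subset _
  | prim => exact Set.singleton_subset_iff.2 hχ
  | neg _ ih | aw _ _ ih | kn _ _ ih | all _ _ ih => exact ih hχ
  | conj _ _ ih₁ ih₂ => exact Set.union_subset (ih₁ hχ.1) (ih₂ hχ.2)
  | lik _ _ _ _ _ ih => exact Set.iUnion_subset fun j => ih j (hχ j)
  | consis => exact hχ.elim

theorem props_subset_props_subst (χ : Formula ι) (σ : ℕ → Formula ι) :
    χ.props ⊆ (χ.subst σ).props := by
  induction χ generalizing σ with
  | var => exact Set.empty_subset _
  | prim | consis => exact subset_rfl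
  | neg _ ih | aw _ _ ih | kn _ _ ih => exact ih σ
  | all _ _ ih => exact ih _
  | conj _ _ ih₁ ih₂ => exact Set.union_subset_union (ih₁ σ) (ih₂ σ)
  | lik _ _ _ _ _ ih => exact Set.iUnion_mono fun j => ih j σ

theorem props_subst_subset {P : Set PProp} (χ : Formula ι) {σ : ℕ → Formula ι}
    (hσ : ∀ n, (σ n).props ⊆ P) : (χ.subst σ).props ⊆ χ.props ∪ P := by
  induction χ generalizing σ with
  | var n => exact (hσ n).trans Set.subset_union_right
  | prim | consis => exact Set.subset_union_left
  | neg _ ih | aw _ _ ih | kn _ _ ih => exact ih hσ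
  | conj _ _ ih₁ ih₂ =>
    exact Set.union_subset ((ih₁ hσ).trans (Set.union_subset_union_left _ Set.subset_union_left))
      ((ih₂ hσ).trans (Set.union_subset_union_left _ Set.subset_union_right))
  | lik _ _ _ φs _ ih =>
    exact Set.iUnion_subset fun j =>
      (ih j hσ).trans (Set.union_subset_union_left _ (Set.subset_iUnion (fun j => (φs j).props) j))
  | all x _ ih =>
    refine ih fun n => ?_
    rcases eq_or_ne n x with rfl | hn
    · simp [props]
    · simpa [Function.update_of_ne hn] using hσ n

theorem props_subst_eq_empty_iff (χ : Formula ι) {σ σ' : ℕ → Formula ι}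
    (hσ : ∀ n, (σ n).props = ∅ ↔ (σ' n).props = ∅) :
    (χ.subst σ).props = ∅ ↔ (χ.subst σ').props = ∅ := by
  induction χ generalizing σ σ' with
  | var n => exact hσ n
  | prim | consis => exact Iff.rfl
  | neg _ ih | aw _ _ ih | kn _ _ ih => exact ih hσ
  | conj _ _ ih₁ ih₂ => simp only [subst, props, Set.union_empty_iff, ih₁ hσ, ih₂ hσ]
  | lik _ _ _ _ _ ih => simp only [subst, props, Set.iUnion_eq_empty, ih _ hσ]
  | all x _ ih =>
    refine ih fun n => ?_
    rcases eq_or_ne n x with rfl | hn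
    · simp
    · simpa [Function.update_of_ne hn] using hσ n

theorem static.props_subst_subset_iff {χ : Formula ι} (hχ : χ.static) {P : Set PProp}
    (hP : P ⊆ shadowProps) {σ : ℕ → Formula ι} (hσ : ∀ n, (σ n).props ⊆ P) :
    (χ.subst σ).props ⊆ P ↔ χ.props = ∅ := by
  refine ⟨fun hsub => ?_, fun hempty => ?_⟩
  · exact disjoint_self.1 <| disjoint_realProps_shadowProps.mono hχ.props_subset
      ((props_subset_props_subst χ σ).trans (hsub.trans hP))
  · simpa [hempty] using props_subst_subset χ hσ

def rename (f : PProp → PProp) : Formula ι → Formula ι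
  | .var n => .var n
  | .prim p => .prim (f p)
  | .neg φ => .neg (φ.rename f)
  | .conj φ ψ => .conj (φ.rename f) (ψ.rename f)
  | .aw i φ => .aw i (φ.rename f)
  | .kn i φ => .kn i (φ.rename f)
  | .lik i k a φs b => .lik i k a (fun j => (φs j).rename f) b
  | .all x φ => .all x (φ.rename f)
  | .consis φ i => .consis (φ.rename f) i

theorem props_rename (f : PProp → PProp) (ψ : Formula ι) :
    (ψ.rename f).props = f '' ψ.props := by
  induction ψ with
  | var | consis => simp [rename, props]
  | prim => simp [rename, props]
  | neg _ ih | aw _ _ ih | kn _ _ ih | all _ _ ih => exact ih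
  | conj _ _ ih₁ ih₂ => simp only [rename, props, ih₁, ih₂, Set.image_union]
  | lik _ _ _ _ _ ih => simp only [rename, props, ih, Set.image_iUnion]

theorem qfSent.rename {ψ : Formula ι} (hψ : ψ.qfSent) (f : PProp → PProp) :
    (ψ.rename f).qfSent := by
  induction ψ with
  | var | all | consis => exact hψ.elim
  | prim => trivial
  | neg _ ih | aw _ _ ih | kn _ _ ih => exact ih hψ
  | conj _ _ ih₁ ih₂ => exact ⟨ih₁ hψ.1, ih₂ hψ.2⟩
  | lik _ _ _ _ _ ih => exact fun j => ih j (hψ j)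

end Formula

@[simps pi L A]
noncomputable def oneState (ι : Type) (N : Set ℕ) : PAS ι where
  S := Unit
  finS := inferInstance
  pi _ _ := false
  K _ _ _ := True
  A _ _ := ∅
  PR _ _ E := by classical exact if () ∈ E then 1 else 0
  L _ := Sum.inr '' N
  K_eucl _ _ _ _ _ _ := trivial
  K_trans _ _ _ _ _ _ := trivial
  K_serial _ s := ⟨s, trivial⟩
  PR_nonneg _ _ _ := by split_ifs <;> norm_num
  PR_empty _ _ := by simp
  PR_add _ _ E F hEF := by
    by_cases hE : () ∈ E
    · simp [hE, Set.disjoint_left.1 hEF hE]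
    · by_cases hF : () ∈ F <;> simp [hE, hF]
  PR_univ _ _ := by simp
  PR_K _ _ := by simp
  PR_inv _ _ _ _ := rfl
  A_inv _ _ _ _ := rfl
  A_sub_L _ _ := Set.empty_subset _
  L_K _ _ _ _ := Set.image_subset_range _ _ |>.trans Set.subset_union_right

theorem mem_consSet_oneState_iff (φ : Formula ι) (i : ι) (N : Set ℕ) (s : Unit) :
    s ∈ consSet (oneState ι N) φ i ↔ Nonempty (φ.props ↪ (Sum.inr '' N : Set PProp)) := by
  have hL : (oneState ι N).L s ∩ shadowProps = Sum.inr '' N :=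
    Set.inter_eq_left.2 (Set.image_subset_range _ _)
  change consistentWith _ _ _ _ ↔ _
  unfold consistentWith
  rw [oneState_A, Set.sdiff_empty, Set.sdiff_empty, hL]
  exact ⟨fun ⟨g, hg⟩ => ⟨⟨g, hg⟩⟩, fun ⟨e⟩ => ⟨e, e.injective⟩⟩

theorem truthQF_oneState_rename {N N' : Set ℕ} (f : PProp → PProp) {ψ : Formula ι}
    (hψ : ψ.qfSent) (hN : ψ.props ⊆ Sum.inr '' N) (hN' : f '' ψ.props ⊆ Sum.inr '' N')
    (s : Unit) : TruthQF (oneState ι N') (ψ.rename f) s ↔ TruthQF (oneState ι N) ψ s := by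
  induction ψ generalizing s with
  | var | all | consis => exact hψ.elim
  | prim => simp [TruthQF, Formula.rename]
  | neg _ ih =>
    simp only [TruthQF, Formula.rename, oneState_L, Formula.props_rename]
    simp only [Formula.props] at hN hN'
    rw [ih hψ hN hN' s, iff_true_intro hN, iff_true_intro hN']
  | conj _ _ ih₁ ih₂ =>
    simp only [Formula.props, Set.union_subset_iff, Set.image_union] at hN hN'
    exact and_congr (ih₁ hψ.1 hN.1 hN'.1 s) (ih₂ hψ.2 hN.2 hN'.2 s)
  | aw =>
    simp only [TruthQF, Formula.rename, oneState_A, Set.subset_empty_iff, Formula.props_rename,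
      Set.image_eq_empty]
  | kn _ _ ih =>
    simp only [TruthQF, Formula.rename, oneState_A, Set.subset_empty_iff,
      Formula.props_rename, Set.image_eq_empty]
    exact and_congr_right' (forall_congr' fun t => imp_congr_right fun _ => ih hψ hN hN' t)
  | lik _ _ _ φs _ ih =>
    have hφs (m) : TruthQF (oneState ι N') ((φs m).rename f) = TruthQF (oneState ι N) (φs m) :=
      funext fun t => propext <| ih m (hψ m)
        ((Set.subset_iUnion (fun m => (φs m).props) m).trans hN)
        ((Set.image_mono (Set.subset_iUnion (fun m => (φs m).props) m)).trans hN') t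
    simp only [TruthQF, Formula.rename, oneState_A, hφs, Set.subset_empty_iff,
      Set.iUnion_eq_empty, Formula.props_rename, Set.image_eq_empty]
    -- `K` and `PR` of `oneState ι N` do not depend on `N`
    exact Iff.rfl

/-- Two quantifier-free sentences that are indistinguishable for the semantics of static
formulas in `oneState ι N` and `oneState ι N'` respectively. -/
structure Twin (N N' : Set ℕ) (ψ ψ' : Formula ι) : Prop where
  props_subset : ψ.props ⊆ Sum.inr '' N
  props_subset' : ψ'.props ⊆ Sum.inr '' N'
  props_eq_empty_iff : ψ.props = ∅ ↔ ψ'.props = ∅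
  truthQF_iff : ∀ s, TruthQF (oneState ι N) ψ s ↔ TruthQF (oneState ι N') ψ' s

namespace Twin

variable {N N' : Set ℕ}

theorem symm {ψ ψ' : Formula ι} (h : Twin N N' ψ ψ') : Twin N' N ψ' ψ :=
  ⟨h.props_subset', h.props_subset, h.props_eq_empty_iff.symm, fun s => (h.truthQF_iff s).symm⟩

theorem var (n : ℕ) : Twin (ι := ι) N N' (.var n) (.var n) :=
  ⟨Set.empty_subset _, Set.empty_subset _, Iff.rfl, fun _ => Iff.rfl⟩

theorem update {σ σ' : ℕ → Formula ι} (hσ : ∀ n, Twin N N' (σ n) (σ' n)) {ψ ψ' : Formula ι}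
    (h : Twin N N' ψ ψ') (x n : ℕ) :
    Twin N N' (Function.update σ x ψ n) (Function.update σ' x ψ' n) := by
  rw [Function.update_apply, Function.update_apply]
  split_ifs
  exacts [h, hσ n]

/-- Renaming every proposition to one fixed element of `N'` produces a twin. -/
theorem exists_twin (hN' : N'.Nonempty) {ψ : Formula ι} (hψ : ψ.qfSent)
    (hN : ψ.props ⊆ Sum.inr '' N) : ∃ ψ', ψ'.qfSent ∧ Twin N N' ψ ψ' := by
  obtain ⟨r, hr⟩ := hN'
  have hN' : (fun _ => (Sum.inr r : PProp)) '' ψ.props ⊆ Sum.inr '' N' := by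
    rintro _ ⟨_, _, rfl⟩
    exact Set.mem_image_of_mem _ hr
  refine ⟨ψ.rename fun _ => Sum.inr r, hψ.rename _, hN, ?_, ?_, fun s => ?_⟩
  · rwa [Formula.props_rename]
  · rw [Formula.props_rename, Set.image_eq_empty]
  · exact (truthQF_oneState_rename _ hψ hN hN' s).symm

end Twin

theorem truth_oneState_iff {N N' : Set ℕ} (hN : N.Nonempty) (hN' : N'.Nonempty)
    {χ : Formula ι} (hχ : χ.static) {σ σ' : ℕ → Formula ι} (hσ : ∀ n, Twin N N' (σ n) (σ' n))
    (s : Unit) : Truth (oneState ι N) σ χ s ↔ Truth (oneState ι N') σ' χ s := by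
  induction χ generalizing σ σ' s with
  | var n => exact (hσ n).truthQF_iff s
  | prim => simp [Truth]
  | neg χ ih =>
    replace hχ : χ.static := hχ
    simp only [Truth, oneState_L]
    rw [hχ.props_subst_subset_iff (Set.image_subset_range _ _) fun n => (hσ n).props_subset,
      hχ.props_subst_subset_iff (Set.image_subset_range _ _) fun n => (hσ n).props_subset']
    exact and_congr_right' (not_congr (ih hχ hσ s))
  | conj _ _ ih₁ ih₂ => exact and_congr (ih₁ hχ.1 hσ s) (ih₂ hχ.2 hσ s)
  | aw _ χ =>
    simp only [Truth, oneState_A, Set.subset_empty_iff]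
    exact χ.props_subst_eq_empty_iff fun n => (hσ n).props_eq_empty_iff
  | kn _ χ ih =>
    simp only [Truth, oneState_A, Set.subset_empty_iff]
    exact and_congr (χ.props_subst_eq_empty_iff fun n => (hσ n).props_eq_empty_iff)
      (forall_congr' fun t => imp_congr_right fun _ => ih hχ hσ t)
  | lik _ _ _ φs _ ih =>
    have hφs (m) : Truth (oneState ι N) σ (φs m) = Truth (oneState ι N') σ' (φs m) :=
      funext fun t => propext <| ih m (hχ m) hσ t
    simp only [Truth, oneState_A, hφs, Set.subset_empty_iff, Set.iUnion_eq_empty]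
    -- `K` and `PR` of `oneState ι N` do not depend on `N`
    exact and_congr (forall_congr' fun m =>
      (φs m).props_subst_eq_empty_iff fun n => (hσ n).props_eq_empty_iff) Iff.rfl
  | all x _ ih =>
    simp only [Truth, oneState_L]
    constructor
    · intro H ψ' hψ' hψ'N'
      obtain ⟨ψ, hψ, htwin⟩ := Twin.exists_twin hN hψ' hψ'N'
      exact (ih hχ (Twin.update hσ htwin.symm x) s).1 (H ψ hψ htwin.props_subset')
    · intro H ψ hψ hψN
      obtain ⟨ψ', hψ', htwin⟩ := Twin.exists_twin hN' hψ hψN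
      exact (ih hχ (Twin.update hσ htwin x) s).2 (H ψ' hψ' htwin.props_subset')
  | consis => exact hχ.elim

theorem sat_oneState_iff {N N' : Set ℕ} (hN : N.Nonempty) (hN' : N'.Nonempty)
    {χ : Formula ι} (hχ : χ.static) :
    Sat (oneState ι N) () χ ↔ Sat (oneState ι N') () χ :=
  truth_oneState_iff hN hN' hχ Twin.var ()

/-- Inexpressibility of consistency: if |prop(φ)| > 1 then Consis(φ,i) is not
equivalent to any formula of the static language L^{∀,X,ℓ,A}_n(Φ). -/
theorem consis_inexpressible {ι : Type} (i : ι) (φ : Formula ι)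
    (h : ∃ p q : PProp, p ≠ q ∧ p ∈ φ.props ∧ q ∈ φ.props) :
    ¬ ∃ χ : Formula ι, χ.static ∧
        ∀ (M : PAS ι) (t : M.S), t ∈ consSet M φ i ↔ Sat M t χ := by
  rintro ⟨χ, hχ, hconsis⟩
  obtain ⟨p, q, hpq, hp, hq⟩ := h
  have hall : () ∈ consSet (oneState ι Set.univ) φ i := by
    have : Infinite (Sum.inr '' Set.univ : Set PProp) :=
      (Set.infinite_univ.image Sum.inr_injective.injOn).to_subtype
    exact (mem_consSet_oneState_iff φ i _ ()).2 <|
      (Cardinal.le_def _ _).1 (Cardinal.mk_le_aleph0.trans (Cardinal.aleph0_le_mk _))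
  have hone : () ∉ consSet (oneState ι {0}) φ i := by
    rw [mem_consSet_oneState_iff, Set.image_singleton]
    rintro ⟨e⟩
    exact hpq (congrArg Subtype.val (e.injective (Subsingleton.elim (e ⟨p, hp⟩) (e ⟨q, hq⟩))))
  exact hone <| (hconsis (oneState ι {0}) ()).2 <|
    (sat_oneState_iff (Set.singleton_nonempty 0) Set.univ_nonempty hχ).2 <|
      (hconsis (oneState ι Set.univ) ()).1 hall

end DynAwareness
end

section
/- Failure of reflexivity under unawareness: in any probabilistic awareness structure, if the language L(s) of a state s contains a real primitive proposition of which agent i is unaware (i.e., there exists p ∈ L(s) ∩ Φ with p ∉ A_i(s)), then s ∉ K_i(s), i.e., agent i does not consider the state s itself possible at s. -/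
namespace DynAwareness

variable {ι : Type}

namespace PAS

variable (M : PAS ι)

theorem L_inter_realProps_subset_A {i : ι} {s t : M.S} (hK : M.K i s t) :
    M.L t ∩ realProps ⊆ M.A i s := fun _ ⟨hpL, hreal⟩ =>
  (M.L_K i s t hK hpL).resolve_right (disjoint_realProps_shadowProps.notMem_of_mem_left hreal)

end PAS

/-- Failure of reflexivity under unawareness: if L(s) contains a real primitive
proposition of which agent i is unaware, then s ∉ K_i(s). -/
theorem not_refl_of_unaware {ι : Type} (M : PAS ι) (i : ι) (s : M.S)
    (h : ∃ p ∈ M.L s, p ∈ realProps ∧ p ∉ M.A i s) :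
    ¬ M.K i s s := by
  intro hK
  obtain ⟨p, hpL, hreal, hpA⟩ := h
  exact hpA (M.L_inter_realProps_subset_A hK ⟨hpL, hreal⟩)

end DynAwareness
end

section
/- Introspection of probabilistic beliefs: in every probabilistic awareness structure M and state s, if a likelihood formula a_1 ℓ_i(φ_1)+⋯+a_k ℓ_i(φ_k) > b holds at (M,s), then (M,s) ⊨ X_i(a_1 ℓ_i(φ_1)+⋯+a_k ℓ_i(φ_k) > b); that is, an agent explicitly knows his own probabilistic beliefs (this follows from the requirement PR_i(s') = PR_i(s) and A_i(s') = A_i(s) for all s' ∈ K_i(s), together with transitivity and the Euclidean property of K_i). -/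
namespace DynAwareness

variable {ι : Type}

/-- Introspection of probabilistic beliefs: if a likelihood formula
a_1 ℓ_i(φ_1)+⋯+a_k ℓ_i(φ_k) > b holds at (M,s), then agent i explicitly
knows it. -/
theorem likelihood_introspection {ι : Type} (M : PAS ι) (s : M.S) (i : ι)
    (k : ℕ) (a : Fin k → ℚ) (φs : Fin k → Formula ι) (b : ℚ)
    (h : Sat M s (.lik i k a φs b)) :
    Sat M s (.kn i (.lik i k a φs b)) := by
  obtain ⟨haw, hpr⟩ := h
  refine ⟨haw, fun t hst => ?_⟩
  have hKeq : {u | M.K i t u} = {u | M.K i s u} := by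
    ext u
    exact ⟨fun h => M.K_trans i s t u hst h, fun h => M.K_eucl i s t u hst h⟩
  have hA : M.A i t = M.A i s := M.A_inv i s t hst
  have hPR : M.PR i t = M.PR i s := M.PR_inv i s t hst
  refine ⟨by rw [hA]; exact haw, ?_⟩
  rw [hPR, hKeq]
  exact hpr

end DynAwareness
end

section
/- Negative introspection of explicit belief restricted to awareness (axiom 5 with awareness): in every probabilistic awareness structure M and state s, if (M,s) ⊨ A_i φ and (M,s) ⊭ X_i φ, then (M,s) ⊨ X_i ¬X_i φ; this follows from the Euclidean property of K_i together with the invariance of A_i over K_i(s) and the language conditions ∪_j A_j(s') ⊆ L(s'). -/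
namespace DynAwareness

variable {ι : Type}

theorem subst_var {ι : Type} (φ : Formula ι) : φ.subst Formula.var = φ := by
  induction φ with
  | var n => rfl
  | prim p => rfl
  | neg φ ih => simp [Formula.subst, ih]
  | conj φ ψ ih1 ih2 => simp [Formula.subst, ih1, ih2]
  | aw i φ ih => simp [Formula.subst, ih]
  | kn i φ ih => simp [Formula.subst, ih]
  | lik i k a φs b ih => simp [Formula.subst, ih]
  | all x φ ih => simp [Formula.subst, Function.update_eq_self, ih]
  | consis φ i ih => simp [Formula.subst, ih]

/-- Negative introspection of explicit belief restricted to awareness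
(axiom 5 with awareness): if (M,s) ⊨ A_i φ and (M,s) ⊭ X_i φ, then
(M,s) ⊨ X_i ¬X_i φ. -/
theorem negative_introspection {ι : Type} (M : PAS ι) (s : M.S) (i : ι)
    (φ : Formula ι) (hA : Sat M s (.aw i φ)) (hX : ¬ Sat M s (.kn i φ)) :
    Sat M s (.kn i (.neg (.kn i φ))) := by
  have hA' : φ.props ⊆ M.A i s := by
    simpa [Sat, Truth, subst_var, Formula.props] using hA
  obtain ⟨u, hKu, hu⟩ : ∃ u, M.K i s u ∧ ¬ Truth M Formula.var φ u := by
    by_contra h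
    push_neg at h
    exact hX ⟨by simpa [Formula.subst, subst_var] using hA', h⟩
  refine ⟨by simpa [Formula.subst, subst_var, Formula.props] using hA', ?_⟩
  intro t hKt
  refine ⟨?_, ?_⟩
  · have := M.A_inv i s t hKt
    simpa [Formula.subst, subst_var, Formula.props, this] using
      (hA'.trans (this ▸ M.A_sub_L i t))
  · intro ⟨_, h2⟩
    exact hu (h2 u (M.K_eucl i s t u hKt hKu))

end DynAwareness
end

section
/- Well-definedness of the updated beliefs: let τ be an acceptable transition rule, M a probabilistic awareness structure, s a state with prop(φ) ⊆ L(s) and prop(φ) ⊄ A_i(s), τ((M,s),φ,i) = (M*,s*), and suppose PR_i(s)(cons(M,φ,i)) ≠ 0. Then for any relation T witnessing acceptability, the sets rep(t') = {t† ∈ K*_i(s*) : (t',t†,f') ∈ T for some f'}, for t' ranging over K_i(s) ∩ cons(M,φ,i), are pairwise disjoint, their union is K*_i(s*), and Σ_{t' ∈ K_i(s) ∩ cons(M,φ,i)} PR*_i(s*)(rep(t')) = 1; i.e., agent i's posterior is exactly his prior conditioned on cons(M,φ,i) and redistributed over the replacements. -/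
namespace DynAwareness

variable {ι : Type}

lemma PR_mono (M : PAS ι) (i : ι) (s : M.S) {E F : Set M.S} (h : E ⊆ F) :
    M.PR i s E ≤ M.PR i s F := by
  have hdisj : Disjoint E (F \ E) := Set.disjoint_sdiff_right.mono_left le_rfl
  have : M.PR i s F = M.PR i s E + M.PR i s (F \ E) := by
    rw [← M.PR_add i s E (F \ E) hdisj, Set.union_diff_cancel h]
  linarith [M.PR_nonneg i s (F \ E)]

lemma PR_finset (M : PAS ι) (i : ι) (s : M.S) (F : Finset M.S) :
    M.PR i s (↑F : Set M.S) = ∑ t ∈ F, M.PR i s {t} := by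
  classical
  induction F using Finset.induction with
  | empty => simpa using M.PR_empty i s
  | @insert a F ha ih =>
    rw [Finset.coe_insert, Set.insert_eq, M.PR_add i s {a} ↑F (by simpa using ha),
      Finset.sum_insert ha, ih]

/-- Well-definedness of the updated beliefs: if PR_i(s)(cons(M,φ,i)) ≠ 0, then
for any relation T witnessing acceptability, the sets
rep(t') = {t† ∈ K*_i(s*) : (t',t†,f') ∈ T for some f'}, for
t' ∈ K_i(s) ∩ cons(M,φ,i), are pairwise disjoint, their union is K*_i(s*), and
the posterior probabilities PR*_i(s*)(rep(t')) sum to 1. -/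
theorem update_well_defined {ι : Type} (τ : TransitionRule ι) (hacc : Acceptable τ)
    (M : PAS ι) (s : M.S) (φ : Formula ι) (i : ι)
    (hL : φ.props ⊆ M.L s) (hA : ¬ φ.props ⊆ M.A i s)
    (hpos : M.PR i s (consSet M φ i) ≠ 0)
    (T : M.S → (τ ⟨M, s⟩ φ i).M.S → (PProp → PProp) → Prop)
    (hT : GoodT M s φ i (τ ⟨M, s⟩ φ i).M (τ ⟨M, s⟩ φ i).s T) :
    (∀ t₁ t₂, M.K i s t₁ → t₁ ∈ consSet M φ i → M.K i s t₂ → t₂ ∈ consSet M φ i →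
        t₁ ≠ t₂ →
        Disjoint
          (repSet T t₁ ∩ {u | (τ ⟨M, s⟩ φ i).M.K i (τ ⟨M, s⟩ φ i).s u})
          (repSet T t₂ ∩ {u | (τ ⟨M, s⟩ φ i).M.K i (τ ⟨M, s⟩ φ i).s u})) ∧
    ((⋃ t ∈ {t | M.K i s t ∧ t ∈ consSet M φ i},
        repSet T t ∩ {u | (τ ⟨M, s⟩ φ i).M.K i (τ ⟨M, s⟩ φ i).s u}) =
      {u | (τ ⟨M, s⟩ φ i).M.K i (τ ⟨M, s⟩ φ i).s u}) ∧
    (∑ᶠ t ∈ {t | M.K i s t ∧ t ∈ consSet M φ i},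
        (τ ⟨M, s⟩ φ i).M.PR i (τ ⟨M, s⟩ φ i).s
          (repSet T t ∩ {u | (τ ⟨M, s⟩ φ i).M.K i (τ ⟨M, s⟩ φ i).s u}) = 1) := by
  classical
  obtain ⟨hRS, hT1, ⟨hTss, hAi, hAj⟩, hT3, hT4⟩ := hT
  obtain ⟨hK', hPR', -⟩ :=
    hT3 s (τ ⟨M, s⟩ φ i).s id hTss (Or.inr rfl) (Or.inr ⟨rfl, rfl⟩) hpos
  refine ⟨?_, ?_, ?_⟩
  · intro t₁ t₂ h₁ hc₁ h₂ hc₂ hne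
    rw [Set.disjoint_left]
    rintro u ⟨⟨f₁, hf₁⟩, -⟩ ⟨⟨f₂, hf₂⟩, -⟩
    exact hne ((hT1 u).2.1 t₁ f₁ t₂ f₂ hf₁ hf₂).1
  · ext u
    simp only [Set.mem_iUnion, Set.mem_setOf_eq, Set.mem_inter_iff]
    constructor
    · rintro ⟨t, ⟨-, -⟩, -, hu⟩; exact hu
    · intro hu
      have hu' : u ∈ {u | ∃ t₀ f₀, (M.K i s t₀ ∧ t₀ ∈ consSet M φ i) ∧
          CompatRS M φ i s f₀ ∧ T t₀ u f₀} := hK' ▸ hu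
      obtain ⟨t₀, f₀, ⟨hK, hcons⟩, -, hTt⟩ := hu'
      exact ⟨t₀, ⟨hK, hcons⟩, ⟨f₀, hTt⟩, hu⟩
  · haveI := M.finS
    haveI : Fintype M.S := Fintype.ofFinite _
    set c := M.PR i s (consSet M φ i) with hc
    set A : Set M.S := {t | M.K i s t ∧ t ∈ consSet M φ i} with hAdef
    have key : ∀ t ∈ A,
        (τ ⟨M, s⟩ φ i).M.PR i (τ ⟨M, s⟩ φ i).s
          (repSet T t ∩ {u | (τ ⟨M, s⟩ φ i).M.K i (τ ⟨M, s⟩ φ i).s u}) =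
          M.PR i s {t} / c := fun t ht => hPR' t ht.1 ht.2
    rw [finsum_mem_congr rfl key]
    have hAfin : A.Finite := Set.toFinite _
    rw [finsum_mem_eq_finite_toFinset_sum _ hAfin, ← Finset.sum_div,
      ← PR_finset M i s hAfin.toFinset]
    have hcover : (↑hAfin.toFinset : Set M.S) = A := hAfin.coe_toFinset
    rw [hcover]
    -- PR A = c
    have hKc1 : M.PR i s {t | M.K i s t}ᶜ = 0 := by
      have := M.PR_add i s {t | M.K i s t} {t | M.K i s t}ᶜ disjoint_compl_right
      rw [Set.union_compl_self, M.PR_univ, M.PR_K] at this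
      linarith
    have hdiff : M.PR i s (consSet M φ i \ {t | M.K i s t}) = 0 := by
      have hle := PR_mono M i s (E := consSet M φ i \ {t | M.K i s t})
        (F := {t | M.K i s t}ᶜ) (fun x hx => hx.2)
      have hge := M.PR_nonneg i s (consSet M φ i \ {t | M.K i s t})
      linarith [hKc1 ▸ hle]
    have hAeq : M.PR i s A = c := by
      have hsplit := M.PR_add i s (consSet M φ i ∩ {t | M.K i s t})
        (consSet M φ i \ {t | M.K i s t}) Set.disjoint_sdiff_inter.symm
      rw [Set.inter_union_diff] at hsplit
      have : A = consSet M φ i ∩ {t | M.K i s t} := by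
        ext t; exact ⟨fun h => ⟨h.2, h.1⟩, fun h => ⟨h.2, h.1⟩⟩
      rw [this, hc]
      linarith [hsplit, hdiff]
    rw [hAeq, div_self hpos]

end DynAwareness
end
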